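/- Let G be a finite simple graph, let (C,F) be an antler in G, and let S' be a minimum feedback vertex set of the graph G − (C ∪ F). Then S' ∪ C is a minimum feedback vertex set of G. In particular, there exists a minimum feedback vertex set of G that contains all of C and no vertex of F. -/

import Mathlib

variable {V : Type*}

/-- The subgraph of `G` with edges restricted to the vertex set `S`
(kept on the same vertex type; vertices outside `S` become isolated).
Used to model the induced subgraph `G[S]` and vertex deletion `G - X = G[Xᶜ]`. -/
def graphRestrict (G : SimpleGraph V) (S : Set V) : SimpleGraph V where
  Adj u v := G.Adj u v ∧ u ∈ S ∧ v ∈ S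
  symm := ⟨fun _ _ h => ⟨h.1.symm, h.2.2, h.2.1⟩⟩
  loopless := ⟨fun v h => G.loopless.irrefl v h.1⟩

/-- `X` is a feedback vertex set of `G`: deleting `X` leaves an acyclic graph. -/
def IsFVS (G : SimpleGraph V) (X : Set V) : Prop :=
  (graphRestrict G Xᶜ).IsAcyclic

/-- The feedback vertex number of `G`: the minimum size of a feedback vertex set. -/
noncomputable def fvs (G : SimpleGraph V) : ℕ :=
  sInf {n | ∃ X : Set V, IsFVS G X ∧ X.ncard = n}

/-- `X` is a minimum feedback vertex set of `G`. -/
def IsMinFVS (G : SimpleGraph V) (X : Set V) : Prop :=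
  IsFVS G X ∧ ∀ Y : Set V, IsFVS G Y → X.ncard ≤ Y.ncard

/-- `(C, F)` is a feedback vertex cut in `G`: `C` and `F` are disjoint, `G[F]` is a
forest, and every tree of `G[F]` has at most one edge to `V(G) \ (C ∪ F)` (i.e. any two
edges from the same component of `G[F]` to the outside coincide). -/
def IsFVC (G : SimpleGraph V) (C F : Set V) : Prop :=
  Disjoint C F ∧ (graphRestrict G F).IsAcyclic ∧
    ∀ u₁ u₂ w₁ w₂ : V, u₁ ∈ F → u₂ ∈ F →
      (graphRestrict G F).Reachable u₁ u₂ →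
      w₁ ∉ C ∪ F → w₂ ∉ C ∪ F → G.Adj u₁ w₁ → G.Adj u₂ w₂ →
      u₁ = u₂ ∧ w₁ = w₂

/-- `(C, F)` is an antler in `G`: a feedback vertex cut with `|C| ≤ fvs(G[C ∪ F])`. -/
def IsAntler (G : SimpleGraph V) (C F : Set V) : Prop :=
  IsFVC G C F ∧ C.ncard ≤ fvs (graphRestrict G (C ∪ F))

/-- A graph `H` together with a vertex set `C` "has order `z`" if every connected
component `H'` of `H` satisfies `fvs(H') = |C ∩ V(H')| ≤ z`. -/
def HasCertOrder {W : Type*} (H : SimpleGraph W) (C : Set W) (z : ℕ) : Prop :=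
  ∀ v : W,
    fvs (graphRestrict H {u | H.Reachable u v}) = (C ∩ {u | H.Reachable u v}).ncard ∧
    (C ∩ {u | H.Reachable u v}).ncard ≤ z

/-- `H` is a `C`-certificate in `G`: a subgraph of `G` for which `C` is a minimum
feedback vertex set. -/
def IsCCertificate (G : SimpleGraph V) (C : Set V) (H : G.Subgraph) : Prop :=
  C ⊆ H.verts ∧ IsMinFVS H.coe {u : H.verts | (u : V) ∈ C}

/-- `H` is a `C`-certificate of order `z` in `G`. -/
def IsCCertificateOfOrder (G : SimpleGraph V) (C : Set V) (H : G.Subgraph) (z : ℕ) : Prop :=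
  IsCCertificate G C H ∧ HasCertOrder H.coe {u : H.verts | (u : V) ∈ C} z

/-- `(C, F)` is a `z`-antler in `G`: an antler such that `G[C ∪ F]` contains a
`C`-certificate of order `z`. -/
def IsZAntler (G : SimpleGraph V) (z : ℕ) (C F : Set V) : Prop :=
  IsAntler G C F ∧ ∃ H : G.Subgraph, H.verts ⊆ C ∪ F ∧ IsCCertificateOfOrder G C H z

/-- The function `f_r(x) = 2x³ + 3x² - x`. -/
def fr (x : ℕ) : ℕ := 2 * x ^ 3 + 3 * x ^ 2 - x

/-- A feedback vertex cut `(C, F)` is reducible if `|F| > f_r(|C|)`. -/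
def IsReducibleFVC (G : SimpleGraph V) (C F : Set V) : Prop :=
  IsFVC G C F ∧ fr C.ncard < F.ncard

/-- A feedback vertex cut `(C, F)` is simple if `|F| ≤ 2 f_r(|C|)` and either
`G[F]` is connected, or all trees of `G[F]` have a common neighbor `v` and there is a
single-tree feedback vertex cut `(C, F₂)` with `v ∈ F₂ \ F` and `F ⊆ F₂`. -/
def IsSimpleFVC (G : SimpleGraph V) (C F : Set V) : Prop :=
  IsFVC G C F ∧ F.ncard ≤ 2 * fr C.ncard ∧
    ((G.induce F).Connected ∨
      ∃ v : V,
        (∀ u ∈ F, ∃ u' ∈ F, (graphRestrict G F).Reachable u u' ∧ G.Adj u' v) ∧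
        ∃ F₂ : Set V, IsFVC G C F₂ ∧ (G.induce F₂).Connected ∧ v ∈ F₂ \ F ∧ F ⊆ F₂)

/-- `G` contains a `v`-flower of order `k`: `k` cycles whose vertex sets pairwise
intersect exactly in `{v}`. -/
def HasFlower (G : SimpleGraph V) (v : V) (k : ℕ) : Prop :=
  ∃ c : Fin k → G.Walk v v,
    (∀ i, (c i).IsCycle) ∧
    ∀ i j, i ≠ j → {x | x ∈ (c i).support} ∩ {x | x ∈ (c j).support} = {v}

/-- `G` contains `k` pairwise vertex-disjoint cycles. -/
def HasDisjointCycles (G : SimpleGraph V) (k : ℕ) : Prop :=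
  ∃ (b : Fin k → V) (c : ∀ i, G.Walk (b i) (b i)),
    (∀ i, (c i).IsCycle) ∧
    ∀ i j, i ≠ j → Disjoint {x | x ∈ (c i).support} {x | x ∈ (c j).support}

/-- `(C, F)` is a 1-antler in `G` (self-contained definition): `G[F]` is a forest,
every tree of `G[F]` has at most one edge to `V(G) \ (C ∪ F)`, and `G[C ∪ F]`
contains `|C|` pairwise vertex-disjoint cycles. -/
def IsOneAntler (G : SimpleGraph V) (C F : Set V) : Prop :=
  IsFVC G C F ∧ HasDisjointCycles (graphRestrict G (C ∪ F)) C.ncard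

/-- `C 1, F 1, …, C ℓ, F ℓ` is a `z`-antler-sequence for `G`: the sets are pairwise
disjoint and each `(C i, F i)` is a `z`-antler in `G` minus all earlier sets. -/
def IsAntlerSeq (G : SimpleGraph V) (z ℓ : ℕ) (C F : Fin ℓ → Set V) : Prop :=
  (∀ i j, i ≠ j → Disjoint (C i) (C j)) ∧
  (∀ i j, i ≠ j → Disjoint (F i) (F j)) ∧
  (∀ i j, Disjoint (C i) (F j)) ∧
  ∀ i, IsZAntler (graphRestrict G (⋃ j, ⋃ (_ : j < i), (C j ∪ F j))ᶜ) z (C i) (F i)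

/-!
Let `Y` be any feedback vertex set of `G`. Then `Y ∩ (C ∪ F)` is one of `G[C ∪ F]`, so it has at
least `fvs(G[C ∪ F]) ≥ |C|` vertices, and `Y \ (C ∪ F)` is one of `G - (C ∪ F)`, so it has at
least `|S'|` vertices; hence `|S' ∪ C| ≤ |Y|`. It remains to see that `S' ∪ C` is a feedback
vertex set. In `G - (S' ∪ C)` every edge between `F` and the rest is a bridge, because each tree
of `G[F]` has only one edge leaving `C ∪ F`. So a cycle lies entirely in `G[F]`, which is a
forest, or entirely in `G - (C ∪ F ∪ S')`, which is acyclic.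
-/

lemma graphRestrict_graphRestrict (G : SimpleGraph V) (A B : Set V) :
    graphRestrict (graphRestrict G A) B = graphRestrict G (A ∩ B) := by
  ext u v
  simp only [graphRestrict, Set.mem_inter_iff]
  tauto

lemma graphRestrict_le (G : SimpleGraph V) (S : Set V) : graphRestrict G S ≤ G :=
  fun _ _ h => h.1

lemma graphRestrict_mono {G H : SimpleGraph V} (hGH : G ≤ H) {A B : Set V} (hAB : A ⊆ B) :
    graphRestrict G A ≤ graphRestrict H B :=
  fun _ _ h => ⟨hGH h.1, hAB h.2.1, hAB h.2.2⟩

namespace SimpleGraph.Walk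

variable {G : SimpleGraph V}

lemma exists_dart_fst_mem_snd_notMem_reachable {u w : V} (p : G.Walk u w) {S : Set V}
    (hu : u ∈ S) (hw : w ∉ S) :
    ∃ d ∈ p.darts, d.fst ∈ S ∧ d.snd ∉ S ∧ (graphRestrict G S).Reachable u d.fst := by
  induction p with
  | nil => exact absurd hu hw
  | @cons a b c hab q ih =>
    by_cases hb : b ∈ S
    · obtain ⟨d, hd, hdS, hdS', hreach⟩ := ih hb hw
      have hab' : (graphRestrict G S).Adj a b := ⟨hab, hu, hb⟩
      exact ⟨d, by simp [hd], hdS, hdS', hab'.reachable.trans hreach⟩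
    · exact ⟨(⟨(a, b), hab⟩ : G.Dart), by simp, hu, hb, .refl _⟩

lemma support_subset_of_forall_dart {u w : V} (p : G.Walk u w) {S : Set V} (hu : u ∈ S)
    (hp : ∀ d ∈ p.darts, d.fst ∈ S → d.snd ∈ S) : ∀ x ∈ p.support, x ∈ S := by
  induction p with
  | nil => simpa
  | @cons a b c hab q ih =>
    simp only [darts_cons, List.mem_cons, forall_eq_or_imp] at hp
    simpa [hu] using ih (hp.1 hu) hp.2

lemma not_isCycle_of_support_subset {v : V} {S : Set V} (hS : (graphRestrict G S).IsAcyclic)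
    (c : G.Walk v v) (hsupp : ∀ x ∈ c.support, x ∈ S) : ¬ c.IsCycle := fun hc =>
  hS (c.transfer _ fun e he => by
    induction e using Sym2.ind with
    | _ a b =>
      exact ⟨c.adj_of_mem_edges he, hsupp a (c.fst_mem_support_of_mem_edges he),
        hsupp b (c.snd_mem_support_of_mem_edges he)⟩) (hc.transfer _)

end SimpleGraph.Walk

open SimpleGraph

lemma IsFVS.graphRestrict_inter {G : SimpleGraph V} {Y : Set V} (hY : IsFVS G Y) (A : Set V) :
    IsFVS (graphRestrict G A) (Y ∩ A) := by
  unfold IsFVS at *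
  rw [graphRestrict_graphRestrict]
  exact hY.anti (graphRestrict_mono le_rfl fun x hx hxY => hx.2 ⟨hxY, hx.1⟩)

lemma fvs_le_ncard {G : SimpleGraph V} {X : Set V} (hX : IsFVS G X) : fvs G ≤ X.ncard :=
  Nat.sInf_le ⟨X, hX, rfl⟩

lemma IsMinFVS.subset_of_graphRestrict [Finite V] {G : SimpleGraph V} {A X : Set V}
    (hX : IsMinFVS (graphRestrict G A) X) : X ⊆ A := by
  have hXA : IsFVS (graphRestrict G A) (X ∩ A) := by
    have := hX.1.graphRestrict_inter A
    rwa [graphRestrict_graphRestrict, Set.inter_self] at this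
  have := Set.eq_of_subset_of_ncard_le Set.inter_subset_left (hX.2 _ hXA)
  exact Set.inter_eq_left.1 this

lemma IsAntler.ncard_le_ncard_inter {G : SimpleGraph V} {C F Y : Set V} (h : IsAntler G C F)
    (hY : IsFVS G Y) : C.ncard ≤ (Y ∩ (C ∪ F)).ncard :=
  h.2.trans (fvs_le_ncard (hY.graphRestrict_inter _))

namespace IsFVC

variable {G : SimpleGraph V} {C F X : Set V}

/-- A second route from `u` to `w` would have to leave the tree of `u` in `G[F]` through another
edge to the outside. -/
lemma notMem_edges_of_isCycle (hCF : IsFVC G C F) {u w v : V} (hu : u ∈ F) (hw : w ∉ F)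
    (c : (graphRestrict G (X ∪ C)ᶜ).Walk v v) (hc : c.IsCycle) : s(u, w) ∉ c.edges := by
  intro huw
  obtain ⟨hadj, hreach⟩ := adj_and_reachable_delete_edges_iff_exists_cycle.2 ⟨v, c, hc, huw⟩
  obtain ⟨p, hp⟩ := reachable_deleteEdges_iff_exists_walk.1 hreach
  obtain ⟨d, hd, hdF', hdF, hreachF⟩ := p.exists_dart_fst_mem_snd_notMem_reachable hu hw
  have hwCF : w ∉ C ∪ F := fun h => h.elim (fun hC => hadj.2.2 (Or.inr hC)) hw
  have hdCF : d.snd ∉ C ∪ F := fun h => h.elim (fun hC => d.adj.2.2 (Or.inr hC)) hdF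
  obtain ⟨rfl, rfl⟩ : u = d.fst ∧ w = d.snd :=
    hCF.2.2 u d.fst w d.snd hu hdF'
      (hreachF.mono (graphRestrict_mono (graphRestrict_le _ _) le_rfl)) hwCF hdCF hadj.1 d.adj.1
  exact hp (List.mem_map_of_mem hd)

lemma isFVS_union (hCF : IsFVC G C F) (hX : IsFVS (graphRestrict G (C ∪ F)ᶜ) X) :
    IsFVS G (X ∪ C) := by
  intro v c hc
  have hcross : ∀ d ∈ c.darts, d.fst ∈ F ↔ d.snd ∈ F := by
    intro d hd
    have hde : d.edge ∈ c.edges := List.mem_map_of_mem hd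
    refine ⟨fun h => ?_, fun h => ?_⟩ <;> by_contra h'
    · exact hCF.notMem_edges_of_isCycle h h' c hc hde
    · exact hCF.notMem_edges_of_isCycle h h' c hc (Sym2.eq_swap ▸ hde)
  by_cases hv : v ∈ F
  · refine c.not_isCycle_of_support_subset ?_
      (c.support_subset_of_forall_dart hv fun d hd => (hcross d hd).1) hc
    exact hCF.2.1.anti (graphRestrict_mono (graphRestrict_le _ _) le_rfl)
  · refine c.not_isCycle_of_support_subset ?_
      (c.support_subset_of_forall_dart (S := Fᶜ) hv fun d hd => mt (hcross d hd).2) hc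
    unfold IsFVS at hX
    rw [graphRestrict_graphRestrict] at hX ⊢
    convert hX using 2
    ext
    simp only [Set.mem_inter_iff, Set.mem_compl_iff, Set.mem_union]
    tauto

end IsFVC

theorem stmt2 [Fintype V] (G : SimpleGraph V) (C F S' : Set V)
    (h : IsAntler G C F) (hS' : IsMinFVS (graphRestrict G (C ∪ F)ᶜ) S') :
    IsMinFVS G (S' ∪ C) ∧ ∃ S : Set V, IsMinFVS G S ∧ C ⊆ S ∧ Disjoint S F := by
  have hmin : IsMinFVS G (S' ∪ C) := by
    refine ⟨h.1.isFVS_union hS'.1, fun Y hY => ?_⟩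
    calc (S' ∪ C).ncard ≤ S'.ncard + C.ncard := Set.ncard_union_le S' C
      _ ≤ (Y \ (C ∪ F)).ncard + (Y ∩ (C ∪ F)).ncard :=
        add_le_add (hS'.2 _ (hY.graphRestrict_inter _)) (h.ncard_le_ncard_inter hY)
      _ = Y.ncard := by rw [add_comm, Set.ncard_inter_add_ncard_sdiff_eq_ncard]
  have hS'F : Disjoint S' F :=
    Set.disjoint_of_subset_left hS'.subset_of_graphRestrict
      (disjoint_compl_left.mono_right Set.subset_union_right)
  exact ⟨hmin, _, hmin, Set.subset_union_right, hS'F.union_left h.1.1⟩
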